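/- Let I be an ideal of A. If G is an SG-basis for I, then G generates I as an ideal of A, i.e., I = ⟨G⟩_A. -/

import Mathlib

/-!
Over a domain the leading term is multiplicative, so `Lt A` is multiplicatively closed and
`R[Lt A]` is just the `R`-span of `Lt A`. Hence the ideal of `R[Lt A]` generated by `Lt G` is
the `R`-span of the leading terms of elements of `⟨G⟩_A`. For `f ∈ I`, `lt f` lies in that span
by the SG-basis property, and comparing coefficients at `lp f` gives `s ∈ ⟨G⟩_A` with
`lt s = lt f`. Then `f - s ∈ I` has a smaller leading power product, and well-founded induction
along the term order shows `f ∈ ⟨G⟩_A`.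
-/

open MvPolynomial

/-- A term order on the monomials (exponent vectors) of a polynomial ring in `n`
variables: a well-founded linear order compatible with multiplication of power
products (i.e. with addition of exponent vectors). -/
structure TermOrder (n : ℕ) where
  lo : LinearOrder (Fin n →₀ ℕ)
  wf : WellFounded lo.lt
  add_le_add : ∀ a b c : Fin n →₀ ℕ, lo.le a b → lo.le (a + c) (b + c)

namespace TermOrder

variable {n : ℕ} {R : Type*} [CommRing R]

/-- `lp p`: the leading power product (exponent vector) of `p`; junk value `0`
for the zero polynomial. -/
noncomputable def lp (ord : TermOrder n) (p : MvPolynomial (Fin n) R) : Fin n →₀ ℕ :=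
  WithBot.unbotD 0 (@Finset.max _ ord.lo p.support)

/-- `lc p`: the leading coefficient of `p` (0 if `p = 0`). -/
noncomputable def lc (ord : TermOrder n) (p : MvPolynomial (Fin n) R) : R :=
  p.coeff (ord.lp p)

/-- `ltm p`: the leading term `lc(p)·lp(p)` of `p` (0 if `p = 0`). -/
noncomputable def ltm (ord : TermOrder n) (p : MvPolynomial (Fin n) R) : MvPolynomial (Fin n) R :=
  monomial (ord.lp p) (ord.lc p)

end TermOrder

variable {n : ℕ} {R : Type*} [CommRing R]

/-- An `F`-power product: a finite product `∏ fᵢ^{eᵢ}` with `fᵢ ∈ F`. -/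
def IsPowerProduct (F : Set (MvPolynomial (Fin n) R)) (q : MvPolynomial (Fin n) R) : Prop :=
  ∃ e : MvPolynomial (Fin n) R →₀ ℕ, (e.support : Set (MvPolynomial (Fin n) R)) ⊆ F ∧
    q = e.prod (fun f k => f ^ k)

/-- `F` is a SAGBI basis for the `R`-subalgebra `A`: `R[Lt A] = R[Lt F]`. -/
def IsSAGBI (ord : TermOrder n) (A : Subalgebra R (MvPolynomial (Fin n) R))
    (F : Set (MvPolynomial (Fin n) R)) : Prop :=
  Algebra.adjoin R (ord.ltm '' (A : Set (MvPolynomial (Fin n) R))) =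
    Algebra.adjoin R (ord.ltm '' F)

/-- One step of s-reduction of `g` to `h` via `F`. -/
def SStep (ord : TermOrder n) (F : Set (MvPolynomial (Fin n) R))
    (g h : MvPolynomial (Fin n) R) : Prop :=
  ∃ (β : Fin n →₀ ℕ) (N : ℕ) (q : Fin N → MvPolynomial (Fin n) R) (r : Fin N → R),
    g.coeff β ≠ 0 ∧
    (∀ i, IsPowerProduct F (q i) ∧ q i ≠ 0 ∧ ord.lp (q i) = β) ∧
    g.coeff β = ∑ i, r i * ord.lc (q i) ∧
    h = g - ∑ i, C (r i) * q i

/-- `g` s-reduces to `h` via `F`: a finite chain of one-step s-reductions. -/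
def SReduce (ord : TermOrder n) (F : Set (MvPolynomial (Fin n) R)) :
    MvPolynomial (Fin n) R → MvPolynomial (Fin n) R → Prop :=
  Relation.ReflTransGen (SStep ord F)

/-- One step of si-reduction of `h` to `h'` via `G`, relative to the subalgebra `A`. -/
def SiStep (ord : TermOrder n) (A : Subalgebra R (MvPolynomial (Fin n) R))
    (G : Set (MvPolynomial (Fin n) R)) (h h' : MvPolynomial (Fin n) R) : Prop :=
  ∃ (α : Fin n →₀ ℕ) (M : ℕ) (g a : Fin M → MvPolynomial (Fin n) R),
    h.coeff α ≠ 0 ∧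
    (∀ i, g i ∈ G) ∧ (∀ i, a i ∈ A) ∧
    (∀ i, a i * g i ≠ 0 ∧ ord.lp (a i * g i) = α) ∧
    (monomial α (h.coeff α) : MvPolynomial (Fin n) R) = ∑ i, ord.ltm (a i * g i) ∧
    h' = h - ∑ i, a i * g i

/-- `h` si-reduces to `h'` via `G`: a finite chain of one-step si-reductions. -/
def SiReduce (ord : TermOrder n) (A : Subalgebra R (MvPolynomial (Fin n) R))
    (G : Set (MvPolynomial (Fin n) R)) :
    MvPolynomial (Fin n) R → MvPolynomial (Fin n) R → Prop :=
  Relation.ReflTransGen (SiStep ord A G)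

/-- The subalgebra `R[Lt A]` generated by the leading terms of elements of `A`. -/
noncomputable def LtAlg (ord : TermOrder n) (A : Subalgebra R (MvPolynomial (Fin n) R)) :
    Subalgebra R (MvPolynomial (Fin n) R) :=
  Algebra.adjoin R (ord.ltm '' (A : Set (MvPolynomial (Fin n) R)))

/-- The leading term of an element of `A`, as an element of `R[Lt A]`. -/
noncomputable def ltA (ord : TermOrder n) (A : Subalgebra R (MvPolynomial (Fin n) R))
    (a : A) : LtAlg ord A :=
  ⟨ord.ltm (a : MvPolynomial (Fin n) R), Algebra.subset_adjoin ⟨a, a.2, rfl⟩⟩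

/-- `G ⊆ I` is a SAGBI–Gröbner basis (SG-basis) for the ideal `I` of `A`:
`Lt G` generates the ideal `⟨Lt I⟩` in the subalgebra `R[Lt A]`. -/
def IsSGBasis (ord : TermOrder n) (A : Subalgebra R (MvPolynomial (Fin n) R))
    (I : Ideal A) (G : Set A) : Prop :=
  Ideal.span
      ((Subtype.val ⁻¹' (ord.ltm '' (Subtype.val '' G)) : Set (LtAlg ord A))) =
  Ideal.span
      ((Subtype.val ⁻¹' (ord.ltm '' (Subtype.val '' (I : Set A))) : Set (LtAlg ord A)))

lemma nonneg_of_wellFoundedLT {α : Type*} [AddCommMonoid α] [LinearOrder α]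
    [IsOrderedAddMonoid α] [IsLeftCancelAdd α] [WellFoundedLT α] (a : α) : 0 ≤ a := by
  by_contra! ha
  refine not_strictAnti_of_wellFoundedLT (fun k : ℕ => k • a)
    (strictAnti_nat_of_succ_lt fun k => ?_)
  rw [succ_nsmul]
  exact lt_of_le_of_ne (by simpa using add_le_add_left ha.le (k • a)) (by simpa using ha.ne)

namespace TermOrder

variable (ord : TermOrder n)

/-- The exponent monoid ordered by `ord`; a separate type, so that instance search finds `ord.lo`
rather than the pointwise order of `Finsupp`. -/
def Syn (_ : TermOrder n) : Type := Fin n →₀ ℕ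

noncomputable instance : AddCommMonoid ord.Syn := inferInstanceAs (AddCommMonoid (Fin n →₀ ℕ))

instance : IsCancelAdd ord.Syn := inferInstanceAs (IsCancelAdd (Fin n →₀ ℕ))

instance : LinearOrder ord.Syn := ord.lo

instance : IsOrderedAddMonoid ord.Syn where
  add_le_add_left a b h c := ord.add_le_add a b c h

instance : WellFoundedLT ord.Syn := ⟨ord.wf⟩

noncomputable def toMonomialOrder : MonomialOrder (Fin n) where
  syn := ord.Syn
  toSyn := { Equiv.refl _ with map_add' := fun _ _ => rfl }
  toSyn_monotone a b hab := by
    obtain ⟨c, rfl⟩ := exists_add_of_le hab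
    exact le_add_of_nonneg_right (α := ord.Syn) (nonneg_of_wellFoundedLT (α := ord.Syn) c)

lemma lp_eq_degree (p : MvPolynomial (Fin n) R) : ord.lp p = ord.toMonomialOrder.degree p := by
  have himage : Finset.image ord.toMonomialOrder.toSyn p.support = p.support := by
    ext a
    simp only [Finset.mem_image]
    exact ⟨fun ⟨b, hb, hba⟩ => hba ▸ hb, fun ha => ⟨a, ha, rfl⟩⟩
  rw [MonomialOrder.degree_eq_unbotD_withBotDegree, MonomialOrder.withBotDegree, himage]
  exact (congrArg (WithBot.unbotD 0) (congrFun WithBot.map_id _)).symm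

lemma ltm_eq_leadingTerm :
    (ord.ltm : MvPolynomial (Fin n) R → _) = ord.toMonomialOrder.leadingTerm := by
  ext1 p
  simp only [ltm, lc, MonomialOrder.leadingTerm, MonomialOrder.leadingCoeff, lp_eq_degree]

end TermOrder

namespace MonomialOrder

open scoped MonomialOrder

variable {σ : Type*} {m : MonomialOrder σ}

lemma exists_mem_leadingTerm_eq_of_mem_span {S : Submodule R (MvPolynomial σ R)}
    {f : MvPolynomial σ R}
    (hf : m.leadingTerm f ∈ Submodule.span R (m.leadingTerm '' (S : Set (MvPolynomial σ R)))) :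
    ∃ s ∈ S, m.leadingTerm s = m.leadingTerm f := by
  classical
  rcases eq_or_ne f 0 with rfl | hf0
  · exact ⟨0, S.zero_mem, rfl⟩
  set d := m.degree f
  -- Read off coefficients at `d`: a leading term `lt b`, `b ∈ S`, contributes there only if
  -- `deg b = d`, and then its coefficient is that of `b`, an element of `S` of degree `≤ d`.
  let S_d := S ⊓ restrictSupport R {e | e ≼[m] d}
  have hspan : Submodule.span R (m.leadingTerm '' (S : Set (MvPolynomial σ R))) ≤
      (S_d.map (lcoeff R d)).comap (lcoeff R d) := by
    rw [Submodule.span_le]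
    rintro _ ⟨b, hb, rfl⟩
    by_cases hbd : m.degree b = d
    · refine ⟨b, ⟨hb, fun e he => hbd ▸ m.le_degree he⟩, ?_⟩
      simp [leadingTerm, leadingCoeff, coeff_monomial, hbd]
    · refine ⟨0, S_d.zero_mem, ?_⟩
      simp [leadingTerm, coeff_monomial, hbd]
  obtain ⟨s, ⟨hsS, hsd⟩, hs⟩ := hspan hf
  have hs : s.coeff d = m.leadingCoeff f := by simpa [leadingTerm, coeff_monomial, d] using hs
  have hdeg : m.degree s = d := by
    refine m.toSyn.injective (le_antisymm (m.degree_le_iff.2 hsd) (m.le_degree ?_))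
    rw [mem_support_iff, hs]
    exact m.leadingCoeff_ne_zero_iff.2 hf0
  refine ⟨s, hsS, leadingTerm_eq_leadingTerm_iff.2 ⟨?_, hdeg⟩⟩
  rw [leadingCoeff, hdeg, hs]

lemma degree_sub_lt_of_leadingTerm_eq {f g : MvPolynomial σ R}
    (h : m.leadingTerm f = m.leadingTerm g) (hfg : f ≠ g) :
    m.degree (f - g) ≺[m] m.degree f := by
  obtain ⟨hlc, hdeg⟩ := leadingTerm_eq_leadingTerm_iff.1 h
  have hf : m.degree f ≠ 0 := fun h0 => hfg <| by
    rw [m.eq_C_of_degree_eq_zero h0, m.eq_C_of_degree_eq_zero (f := g) (hdeg ▸ h0), hlc]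
  have hsplit : f - g = (f - m.leadingTerm f) - (g - m.leadingTerm g) := by
    rw [h]; ring
  rw [hsplit]
  refine m.degree_sub_le.trans_lt (max_lt (m.degree_sub_leadingTerm_lt_degree hf) ?_)
  rw [hdeg]
  exact m.degree_sub_leadingTerm_lt_degree (hdeg ▸ hf)

variable [NoZeroDivisors R] (m) (A : Subalgebra R (MvPolynomial σ R))

lemma toSubmodule_adjoin_image_leadingTerm :
    Subalgebra.toSubmodule (Algebra.adjoin R (m.leadingTerm '' (A : Set (MvPolynomial σ R)))) =
      Submodule.span R (m.leadingTerm '' (A : Set (MvPolynomial σ R))) := by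
  rw [Algebra.adjoin_eq_span]
  congr 1
  refine subset_antisymm (fun x hx => ?_) Submonoid.subset_closure
  induction hx using Submonoid.closure_induction with
  | mem x hx => exact hx
  | one => exact ⟨1, A.one_mem, by simpa using m.leadingTerm_C (1 : R)⟩
  | mul x y _ _ hx hy =>
    obtain ⟨a, ha, rfl⟩ := hx
    obtain ⟨b, hb, rfl⟩ := hy
    exact ⟨a * b, A.mul_mem ha hb, m.leadingTerm_mul a b⟩

lemma mul_mem_span_image_leadingTerm {J : Ideal A} {x y : MvPolynomial σ R}
    (hx : x ∈ Algebra.adjoin R (m.leadingTerm '' (A : Set (MvPolynomial σ R))))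
    (hy : y ∈ Submodule.span R (m.leadingTerm '' (Subtype.val '' (J : Set A)))) :
    x * y ∈ Submodule.span R (m.leadingTerm '' (Subtype.val '' (J : Set A))) := by
  rw [← Subalgebra.mem_toSubmodule, toSubmodule_adjoin_image_leadingTerm] at hx
  have hxy := Submodule.mul_mem_mul hx hy
  rw [Submodule.span_mul_span] at hxy
  refine Submodule.span_mono ?_ hxy
  rintro _ ⟨_, ⟨a, ha, rfl⟩, _, ⟨_, ⟨j, hj, rfl⟩, rfl⟩, rfl⟩
  exact ⟨_, ⟨_, J.mul_mem_left ⟨a, ha⟩ hj, rfl⟩,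
    m.leadingTerm_mul a (j : MvPolynomial σ R)⟩

end MonomialOrder

section LeadingTermAlgebra

variable [IsDomain R] {ord : TermOrder n} {A : Subalgebra R (MvPolynomial (Fin n) R)}

lemma coe_mem_span_ltm_of_mem_ideal_span {G : Set A} {y : LtAlg ord A}
    (hy : y ∈ Ideal.span (Subtype.val ⁻¹' (ord.ltm '' (Subtype.val '' G)))) :
    (y : MvPolynomial (Fin n) R) ∈
      Submodule.span R (ord.ltm '' (Subtype.val '' (Ideal.span G : Set A))) := by
  induction hy using Submodule.span_induction with
  | mem x hx => exact Submodule.subset_span (Set.image_mono (Set.image_mono Ideal.subset_span) hx)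
  | zero => exact zero_mem _
  | add x y _ _ hx hy => exact add_mem hx hy
  | smul c y _ hy =>
    have hc : (c : MvPolynomial (Fin n) R) ∈ Algebra.adjoin R (ord.ltm '' (A : Set _)) := c.2
    rw [TermOrder.ltm_eq_leadingTerm] at hc hy ⊢
    exact MonomialOrder.mul_mem_span_image_leadingTerm _ A hc hy

lemma IsSGBasis.exists_mem_span_ltm_eq {I : Ideal A} {G : Set A} (hSG : IsSGBasis ord A I G)
    {f : A} (hf : f ∈ I) :
    ∃ s ∈ Ideal.span G, ord.ltm (s : MvPolynomial (Fin n) R) = ord.ltm f := by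
  have hltf : ltA ord A f ∈ Ideal.span (Subtype.val ⁻¹' (ord.ltm '' (Subtype.val '' G))) := by
    rw [hSG]
    exact Ideal.subset_span ⟨f, ⟨f, hf, rfl⟩, rfl⟩
  have hspan : ord.ltm (f : MvPolynomial (Fin n) R) ∈ _ :=
    coe_mem_span_ltm_of_mem_ideal_span hltf
  let S := ((Ideal.span G).restrictScalars R).map A.val.toLinearMap
  have hS : Subtype.val '' (Ideal.span G : Set A) = S := by
    ext x; simp [S]
  rw [TermOrder.ltm_eq_leadingTerm, hS] at hspan
  obtain ⟨_, hsS, hst⟩ := MonomialOrder.exists_mem_leadingTerm_eq_of_mem_span hspan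
  obtain ⟨s, hs, rfl⟩ := Submodule.mem_map.1 hsS
  rw [TermOrder.ltm_eq_leadingTerm]
  exact ⟨s, hs, hst⟩

end LeadingTermAlgebra

theorem isSGBasis_span_eq_general {n : ℕ} {R : Type*} [CommRing R] [IsDomain R]
    (ord : TermOrder n)
    (A : Subalgebra R (MvPolynomial (Fin n) R)) (I : Ideal A) (G : Set A)
    (hGI : G ⊆ (I : Set A)) (hSG : IsSGBasis ord A I G) :
    Ideal.span G = I := by
  have hle : Ideal.span G ≤ I := Ideal.span_le.2 hGI
  refine le_antisymm hle fun f hf => ?_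
  set m := ord.toMonomialOrder
  induction hd : m.toSyn (m.degree (f : MvPolynomial (Fin n) R)) using WellFoundedLT.induction
    generalizing f with
  | ind d ih =>
    obtain ⟨s, hs, hsf⟩ := hSG.exists_mem_span_ltm_eq hf
    rw [TermOrder.ltm_eq_leadingTerm] at hsf
    by_cases hfs : f = s
    · exact hfs ▸ hs
    have hlt := m.degree_sub_lt_of_leadingTerm_eq hsf.symm (Subtype.coe_injective.ne hfs)
    have hfs_mem : f - s ∈ Ideal.span G := ih _ (hd ▸ hlt) (f - s) (I.sub_mem hf (hle hs)) rfl
    simpa using add_mem hfs_mem hs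

/-- an SG-basis `G` for the ideal `I` of `A` generates `I`. -/
theorem isSGBasis_span_eq {n : ℕ} {R : Type*} [CommRing R] [IsDomain R]
    [IsNoetherianRing R] (ord : TermOrder n)
    (A : Subalgebra R (MvPolynomial (Fin n) R)) (I : Ideal A) (G : Set A)
    (hGI : G ⊆ (I : Set A)) (hSG : IsSGBasis ord A I G) :
    Ideal.span G = I :=
  isSGBasis_span_eq_general ord A I G hGI hSG
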